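/- Let (Ω, F, P) be a probability space and let S, H, T, Y be random variables taking values in standard Borel (measurable) spaces, where H = φ(S) for a measurable map φ (so H is σ(S)-measurable). If T is conditionally independent of the pair (S, Y) given H (i.e., given the σ-algebra generated by H), then T is conditionally independent of Y given S (i.e., given the σ-algebra generated by S). In other words, adjusting for the observed history S controls for the confounder H: since the treatment assignment depends on the latent state H only and H is a deterministic measurable function of the observed data S, conditioning on S is sufficient to block the confounding between T and Y. -/

import Mathlib

open MeasureTheory ProbabilityTheory

/-!
This is the weak union property of conditional independence. Independence of `T` and `(S, Y)`
given `H` says that `P(T ∈ A | S, Y) = P(T ∈ A | H)`; as `σ(H) ⊆ σ(S) ⊆ σ(S, Y)`, the tower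
property gives `P(T ∈ A | S) = P(T ∈ A | H)` as well, and pulling the `σ(S, Y)`-measurable
indicator of `{Y ∈ B}` out of `P(T ∈ A, Y ∈ B | S, Y)` yields the factorisation given `S`.
-/

lemma Set.indicator_one_mul_eq_indicator {ι M₀ : Type*} [MulZeroOneClass M₀] (s : Set ι)
    (f : ι → M₀) : s.indicator (fun _ ↦ 1) * f = s.indicator f := by
  funext i
  by_cases hi : i ∈ s <;> simp [hi]

namespace ProbabilityTheory

variable {Ω : Type*} {m m' m₁ m₂ mΩ : MeasurableSpace Ω} [StandardBorelSpace Ω]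
  {μ : Measure Ω} [IsFiniteMeasure μ] {hm : m ≤ mΩ} {A C : Set Ω}

lemma CondIndep.setIntegral_condExp_indicator (h : CondIndep m m₁ m₂ hm μ)
    (hm₁ : m₁ ≤ mΩ) (hm₂ : m₂ ≤ mΩ) (hA : MeasurableSet[m₁] A) (hC : MeasurableSet[m₂] C) :
    ∫ ω in C, (μ⟦A | m⟧) ω ∂μ = μ.real (A ∩ C) := by
  have hCint : Integrable (C.indicator fun _ ↦ (1 : ℝ)) μ :=
    (integrable_const 1).indicator (hm₂ _ hC)
  have hprod : Integrable (C.indicator (fun _ ↦ (1 : ℝ)) * μ⟦A | m⟧) μ := by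
    rw [Set.indicator_one_mul_eq_indicator]
    exact integrable_condExp.indicator (hm₂ _ hC)
  have hfactor : μ⟦A ∩ C | m⟧ =ᵐ[μ] μ⟦A | m⟧ * μ⟦C | m⟧ :=
    (condIndep_iff m m₁ m₂ hm hm₁ hm₂ μ).1 h A C hA hC
  calc ∫ ω in C, (μ⟦A | m⟧) ω ∂μ
      = ∫ ω, (C.indicator (fun _ ↦ (1 : ℝ)) * μ⟦A | m⟧) ω ∂μ := by
        rw [Set.indicator_one_mul_eq_indicator, integral_indicator (hm₂ _ hC)]
    _ = ∫ ω, (μ[C.indicator (fun _ ↦ (1 : ℝ)) * μ⟦A | m⟧ | m]) ω ∂μ :=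
        (integral_condExp hm).symm
    _ = ∫ ω, (μ⟦A | m⟧ * μ⟦C | m⟧) ω ∂μ := by
        refine integral_congr_ae ?_
        filter_upwards [condExp_mul_of_stronglyMeasurable_right stronglyMeasurable_condExp
          hprod hCint] with ω hω
        rw [hω, mul_comm]
    _ = μ.real (A ∩ C) := by
        rw [← integral_congr_ae hfactor, integral_condExp hm,
          integral_indicator_const _ ((hm₁ _ hA).inter (hm₂ _ hC)), smul_eq_mul, mul_one]

lemma CondIndep.condExp_indicator_ae_eq (h : CondIndep m m₁ m₂ hm μ)
    (hm₁ : m₁ ≤ mΩ) (hm₂ : m₂ ≤ mΩ) (hmm' : m ≤ m') (hm'₂ : m' ≤ m₂)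
    (hA : MeasurableSet[m₁] A) : μ⟦A | m'⟧ =ᵐ[μ] μ⟦A | m⟧ := by
  refine (ae_eq_condExp_of_forall_setIntegral_eq (hm'₂.trans hm₂)
    ((integrable_const 1).indicator (hm₁ _ hA)) (fun _ _ _ ↦ integrable_condExp.integrableOn)
    (fun C hC _ ↦ ?_) (stronglyMeasurable_condExp.mono hmm').aestronglyMeasurable).symm
  rw [h.setIntegral_condExp_indicator hm₁ hm₂ hA (hm'₂ _ hC), integral_indicator_const _ (hm₁ _ hA),
    measureReal_restrict_apply (hm₁ _ hA), smul_eq_mul, mul_one]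

theorem CondIndep.weak_union (h : CondIndep m m₁ m₂ hm μ)
    (hm₁ : m₁ ≤ mΩ) (hm₂ : m₂ ≤ mΩ) (hmm' : m ≤ m') (hm'₂ : m' ≤ m₂) :
    CondIndep m' m₁ m₂ (hm'₂.trans hm₂) μ := by
  rw [condIndep_iff _ _ _ _ hm₁ hm₂]
  intro A B hA hB
  have hAint : Integrable (A.indicator fun _ ↦ (1 : ℝ)) μ :=
    (integrable_const 1).indicator (hm₁ _ hA)
  have hBint : Integrable (B.indicator fun _ ↦ (1 : ℝ)) μ :=
    (integrable_const 1).indicator (hm₂ _ hB)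
  have hpull : μ⟦A ∩ B | m₂⟧ =ᵐ[μ] B.indicator (fun _ ↦ 1) * μ⟦A | m₂⟧ := by
    have hAB : (A ∩ B).indicator (fun _ ↦ (1 : ℝ)) = B.indicator (fun _ ↦ 1) * A.indicator 1 := by
      rw [Set.indicator_one_mul_eq_indicator, Set.indicator_indicator, Set.inter_comm]; rfl
    rw [hAB]
    refine condExp_mul_of_stronglyMeasurable_left (stronglyMeasurable_const.indicator hB) ?_ hAint
    rw [← hAB]
    exact (integrable_const 1).indicator ((hm₁ _ hA).inter (hm₂ _ hB))
  have hprod : Integrable (B.indicator (fun _ ↦ (1 : ℝ)) * μ⟦A | m⟧) μ := by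
    rw [Set.indicator_one_mul_eq_indicator]
    exact integrable_condExp.indicator (hm₂ _ hB)
  calc μ⟦A ∩ B | m'⟧
      =ᵐ[μ] μ[μ⟦A ∩ B | m₂⟧ | m'] := (condExp_condExp_of_le hm'₂ hm₂).symm
    _ =ᵐ[μ] μ[B.indicator (fun _ ↦ 1) * μ⟦A | m⟧ | m'] := condExp_congr_ae <| hpull.trans <|
        (ae_eq_refl _).mul (h.condExp_indicator_ae_eq hm₁ hm₂ (hmm'.trans hm'₂) le_rfl hA)
    _ =ᵐ[μ] μ⟦B | m'⟧ * μ⟦A | m⟧ :=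
        condExp_mul_of_stronglyMeasurable_right (stronglyMeasurable_condExp.mono hmm') hprod hBint
    _ =ᵐ[μ] μ⟦A | m'⟧ * μ⟦B | m'⟧ := by
        filter_upwards [h.condExp_indicator_ae_eq hm₁ hm₂ hmm' hm'₂ hA] with ω hω
        simp only [Pi.mul_apply, hω, mul_comm]

end ProbabilityTheory

theorem condIndepFun_treatment_outcome_given_history_general
    {Ω 𝒮 ℋ 𝒯 𝒴 : Type*}
    {mΩ : MeasurableSpace Ω} [StandardBorelSpace Ω]
    [MeasurableSpace 𝒮]
    [MeasurableSpace ℋ]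
    [MeasurableSpace 𝒯]
    [MeasurableSpace 𝒴]
    (P : Measure Ω) [IsProbabilityMeasure P]
    (S : Ω → 𝒮) (H : Ω → ℋ) (T : Ω → 𝒯) (Y : Ω → 𝒴)
    (hS : Measurable S) (hH : Measurable H) (hT : Measurable T) (hY : Measurable Y)
    (φ : 𝒮 → ℋ) (hφ : Measurable φ) (hHS : H = φ ∘ S)
    (hCI : CondIndepFun (MeasurableSpace.comap H inferInstance) hH.comap_le
      T (fun ω => (S ω, Y ω)) P) :
    CondIndepFun (MeasurableSpace.comap S inferInstance) hS.comap_le T Y P := by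
  rw [condIndepFun_iff_condIndep] at hCI ⊢
  have hH_le_S : MeasurableSpace.comap H inferInstance ≤ MeasurableSpace.comap S inferInstance := by
    subst hHS
    exact (hφ.comp (comap_measurable S)).comap_le
  have hS_le_SY : MeasurableSpace.comap S inferInstance
      ≤ MeasurableSpace.comap (fun ω ↦ (S ω, Y ω)) inferInstance :=
    (comap_measurable (fun ω ↦ (S ω, Y ω))).fst.comap_le
  have hY_le_SY : MeasurableSpace.comap Y inferInstance
      ≤ MeasurableSpace.comap (fun ω ↦ (S ω, Y ω)) inferInstance :=
    (comap_measurable (fun ω ↦ (S ω, Y ω))).snd.comap_le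
  exact condIndep_of_condIndep_of_le_right
    (hCI.weak_union hT.comap_le (hS.prodMk hY).comap_le hH_le_S hS_le_SY) hY_le_SY

/-- Lemma 3.1: if the treatment `T` is conditionally independent of the pair `(S, Y)`
given the latent state `H`, and `H = φ ∘ S` is a measurable function of the observed
history `S`, then `T` is conditionally independent of the outcome `Y` given `S`. -/
theorem condIndepFun_treatment_outcome_given_history
    {Ω 𝒮 ℋ 𝒯 𝒴 : Type*}
    {mΩ : MeasurableSpace Ω} [StandardBorelSpace Ω] [Nonempty Ω]
    [MeasurableSpace 𝒮] [StandardBorelSpace 𝒮]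
    [MeasurableSpace ℋ] [StandardBorelSpace ℋ]
    [MeasurableSpace 𝒯] [StandardBorelSpace 𝒯]
    [MeasurableSpace 𝒴] [StandardBorelSpace 𝒴]
    (P : Measure Ω) [IsProbabilityMeasure P]
    (S : Ω → 𝒮) (H : Ω → ℋ) (T : Ω → 𝒯) (Y : Ω → 𝒴)
    (hS : Measurable S) (hH : Measurable H) (hT : Measurable T) (hY : Measurable Y)
    (φ : 𝒮 → ℋ) (hφ : Measurable φ) (hHS : H = φ ∘ S)
    (hCI : CondIndepFun (MeasurableSpace.comap H inferInstance) hH.comap_le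
      T (fun ω => (S ω, Y ω)) P) :
    CondIndepFun (MeasurableSpace.comap S inferInstance) hS.comap_le T Y P :=
  condIndepFun_treatment_outcome_given_history_general (mΩ := mΩ) P S H T Y hS hH hT hY φ hφ hHS hCI
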